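/- Let 𝒳 = ℝ^d, c(x,y) = ‖x−y‖², and fix σ² ≥ 0. Define P_G^σ as the law of G(Z) + ε where Z ∼ P_Z, ε ∼ N(0, σ²·I_d) independent of Z. Then W_c(P_X, P_G^σ) ≤ d·σ² + inf over couplings P of (P_X, P_Z) of E_P[‖X − G(Z)‖²], and any measurable G minimizing the right-hand infimum (over G) is independent of σ² and also minimizes W_c(P_X, P_G^0) where P_G^0 = G_* P_Z. -/

import Mathlib

/-!
Given a coupling `π` of `(P_X, P_Z)`, draw `ε ∼ N(0, σ² I_d)` independently and pair `X` with
`G(Z) + ε`: this couples `P_X` with `P_G^σ`, and since the coordinates of `ε` are centred with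
variance `σ²`, its cost is `E_π ‖X - G(Z)‖² + d σ²`.

For the noiseless case, the couplings of `(P_X, G_* P_Z)` are exactly the images of couplings of
`(P_X, P_Z)` under `id × G`: pushing forward gives one inclusion, and conversely a coupling `γ` of
`(P_X, G_* P_Z)` lifts by gluing `P_Z` to the conditional law of `X` given `G(Z)` under `γ`
(a disintegration, available because `ℝ^d` is standard Borel). So the infimum over couplings of
`E ‖X - G(Z)‖²` is `W_c(P_X, G_* P_Z)`, and both are minimised by the same `G`.
-/

open MeasureTheory ProbabilityTheory
open scoped ENNReal NNReal

/-- The set of couplings of two measures. -/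
def couplings {α β : Type*} [MeasurableSpace α] [MeasurableSpace β]
    (μ : Measure α) (ν : Measure β) : Set (Measure (α × β)) :=
  {γ | γ.map Prod.fst = μ ∧ γ.map Prod.snd = ν}

lemma lintegral_sq_gaussianReal (m : ℝ) (v : ℝ≥0) :
    ∫⁻ x, ENNReal.ofReal (x ^ 2) ∂gaussianReal m v = ENNReal.ofReal (m ^ 2) + v := by
  have hL2 : MemLp (fun x : ℝ => x) 2 (gaussianReal m v) := memLp_id_gaussianReal 2
  have hmoment : ∫ x, x ^ 2 ∂gaussianReal m v = m ^ 2 + v := by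
    have hvar := variance_eq_sub hL2
    simp only [variance_fun_id_gaussianReal, Pi.pow_apply, integral_id_gaussianReal] at hvar
    linarith
  rw [← ofReal_integral_eq_lintegral_ofReal hL2.integrable_sq (ae_of_all _ fun _ => sq_nonneg _),
    hmoment, ENNReal.ofReal_add (sq_nonneg _) v.coe_nonneg, ENNReal.ofReal_coe_nnreal]

lemma lintegral_sq_const_sub_gaussianReal (a : ℝ) (v : ℝ≥0) :
    ∫⁻ t, ENNReal.ofReal ((a - t) ^ 2) ∂gaussianReal 0 v = ENNReal.ofReal (a ^ 2) + v := by
  rw [← lintegral_map (f := fun x : ℝ => ENNReal.ofReal (x ^ 2)) (by fun_prop) (by fun_prop),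
    gaussianReal_map_const_sub, sub_zero, lintegral_sq_gaussianReal]

lemma lintegral_sum_sq_sub_pi_gaussianReal {ι : Type*} [Fintype ι] (v : ℝ≥0) (a : ι → ℝ) :
    ∫⁻ e, ENNReal.ofReal (∑ i, (a i - e i) ^ 2) ∂Measure.pi (fun _ : ι => gaussianReal 0 v)
      = ENNReal.ofReal (∑ i, a i ^ 2) + Fintype.card ι * v := by
  have hcoord (i : ι) : ∫⁻ e, ENNReal.ofReal ((a i - e i) ^ 2)
      ∂Measure.pi (fun _ : ι => gaussianReal 0 v) = ENNReal.ofReal (a i ^ 2) + v :=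
    ((measurePreserving_eval (fun _ : ι => gaussianReal 0 v) i).lintegral_comp
      (f := fun t : ℝ => ENNReal.ofReal ((a i - t) ^ 2)) (by fun_prop)).trans
      (lintegral_sq_const_sub_gaussianReal _ _)
  simp_rw [ENNReal.ofReal_sum_of_nonneg (fun i _ => sq_nonneg (a i - _)),
    ENNReal.ofReal_sum_of_nonneg (fun i _ => sq_nonneg (a i))]
  rw [lintegral_finsetSum _ (fun i _ => by fun_prop)]
  simp [hcoord, Finset.sum_add_distrib]

lemma MeasureTheory.Measure.map_prodMap_compProd_comap {β β' γ : Type*} [MeasurableSpace β]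
    [MeasurableSpace β'] [MeasurableSpace γ] (ν : Measure β) [SFinite ν] (κ : Kernel β' γ)
    [IsSFiniteKernel κ] {f : β → β'} (hf : Measurable f) :
    (ν ⊗ₘ κ.comap f hf).map (Prod.map f id) = ν.map f ⊗ₘ κ := by
  ext s hs
  have hs' : MeasurableSet (Prod.map f id ⁻¹' s) := (hf.prodMap measurable_id) hs
  rw [Measure.map_apply (hf.prodMap measurable_id) hs, Measure.compProd_apply hs',
    Measure.compProd_apply hs, lintegral_map (Kernel.measurable_kernel_prodMk_left hs) hf]
  rfl

noncomputable section Coupling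

variable {α β β' E : Type*} [MeasurableSpace α] [MeasurableSpace β] [MeasurableSpace β']
  [MeasurableSpace E] {μ : Measure α} {ν : Measure β} {π : Measure (α × β)}

def optimalCost (c : α × β → ℝ≥0∞) (μ : Measure α) (ν : Measure β) : ℝ≥0∞ :=
  sInf ((fun π : Measure (α × β) => ∫⁻ p, c p ∂π) '' couplings μ ν)

lemma optimalCost_le_lintegral (c : α × β → ℝ≥0∞) (hπ : π ∈ couplings μ ν) :
    optimalCost c μ ν ≤ ∫⁻ p, c p ∂π :=
  sInf_le ⟨π, hπ, rfl⟩

lemma le_add_optimalCost {c : α × β → ℝ≥0∞} {a b : ℝ≥0∞}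
    (h : ∀ π ∈ couplings μ ν, b ≤ a + ∫⁻ p, c p ∂π) : b ≤ a + optimalCost c μ ν := by
  rw [optimalCost, ENNReal.add_sInf]
  exact le_iInf₂ fun _ ⟨π, hπ, hx⟩ => hx ▸ h π hπ

lemma isProbabilityMeasure_of_mem_couplings [IsProbabilityMeasure μ] (hπ : π ∈ couplings μ ν) :
    IsProbabilityMeasure π := by
  have : IsProbabilityMeasure (π.map Prod.fst) := hπ.1 ▸ ‹_›
  exact Measure.isProbabilityMeasure_of_map Prod.fst

lemma map_prodMap_mem_couplings {f : β → β'} (hf : Measurable f) (hπ : π ∈ couplings μ ν) :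
    π.map (Prod.map id f) ∈ couplings μ (ν.map f) := by
  constructor
  · rw [Measure.map_map measurable_fst (measurable_id.prodMap hf)]
    exact hπ.1
  · rw [Measure.map_map measurable_snd (measurable_id.prodMap hf), ← hπ.2,
      Measure.map_map hf measurable_snd]
    rfl

lemma map_prodAssoc_prod_mem_couplings [IsProbabilityMeasure μ] (ρ : Measure E)
    [IsProbabilityMeasure ρ] (hπ : π ∈ couplings μ ν) :
    (π.prod ρ).map MeasurableEquiv.prodAssoc ∈ couplings μ (ν.prod ρ) := by
  have := isProbabilityMeasure_of_mem_couplings hπ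
  constructor
  · have hfst : (π.prod ρ).map Prod.fst = π := Measure.fst_prod
    rw [Measure.map_map measurable_fst MeasurableEquiv.prodAssoc.measurable]
    change (π.prod ρ).map (Prod.fst ∘ Prod.fst) = μ
    rw [← Measure.map_map measurable_fst measurable_fst, hfst, hπ.1]
  · rw [Measure.map_map measurable_snd MeasurableEquiv.prodAssoc.measurable]
    change (π.prod ρ).map (Prod.map Prod.snd id) = ν.prod ρ
    rw [← Measure.map_prod_map _ _ measurable_snd measurable_id, hπ.2, Measure.map_id]

lemma optimalCost_prod_le [IsProbabilityMeasure μ] (c : α × (β × E) → ℝ≥0∞) (ρ : Measure E)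
    [IsProbabilityMeasure ρ] (hπ : π ∈ couplings μ ν) :
    optimalCost c μ (ν.prod ρ) ≤ ∫⁻ p, ∫⁻ e, c (p.1, (p.2, e)) ∂ρ ∂π := by
  refine (optimalCost_le_lintegral c (map_prodAssoc_prod_mem_couplings ρ hπ)).trans ?_
  rw [lintegral_map_equiv]
  exact lintegral_prod_le _

lemma optimalCost_map_le (c : α × β' → ℝ≥0∞) {f : β → β'} (hf : Measurable f) :
    optimalCost c μ (ν.map f) ≤ optimalCost (fun p => c (p.1, f p.2)) μ ν := by
  refine le_sInf ?_
  rintro _ ⟨π, hπ, rfl⟩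
  exact (optimalCost_le_lintegral c (map_prodMap_mem_couplings hf hπ)).trans
    (lintegral_map_le _ _)

lemma exists_mem_couplings_map_prodMap_eq [StandardBorelSpace α] [Nonempty α]
    [IsProbabilityMeasure μ] [SFinite ν] {f : β → β'} (hf : Measurable f)
    {π : Measure (α × β')} (hπ : π ∈ couplings μ (ν.map f)) :
    ∃ π' ∈ couplings μ ν, π'.map (Prod.map id f) = π := by
  have := isProbabilityMeasure_of_mem_couplings hπ
  set ρ := π.map Prod.swap
  have hρ : ρ.fst = ν.map f := by rw [Measure.fst_map_swap]; exact hπ.2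
  set π'' := ν ⊗ₘ ρ.condKernel.comap f hf
  have hπ'' : π''.map (Prod.map f id) = ρ := by
    rw [Measure.map_prodMap_compProd_comap ν _ hf, ← hρ, Measure.disintegrate]
  have hmap : (π''.map Prod.swap).map (Prod.map id f) = π := by
    rw [Measure.map_map (measurable_id.prodMap hf) measurable_swap]
    change π''.map (Prod.swap ∘ Prod.map f id) = π
    rw [← Measure.map_map measurable_swap (hf.prodMap measurable_id), hπ'',
      Measure.map_map measurable_swap measurable_swap, Prod.swap_swap_eq, Measure.map_id]
  refine ⟨π''.map Prod.swap, ⟨?_, ?_⟩, hmap⟩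
  · rw [← hπ.1, ← hmap, Measure.map_map measurable_fst (measurable_id.prodMap hf)]
    rfl
  · rw [Measure.map_map measurable_snd measurable_swap]
    exact Measure.fst_compProd ν _

lemma optimalCost_map [StandardBorelSpace α] [Nonempty α] [IsProbabilityMeasure μ] [SFinite ν]
    {c : α × β' → ℝ≥0∞} (hc : Measurable c) {f : β → β'} (hf : Measurable f) :
    optimalCost c μ (ν.map f) = optimalCost (fun p => c (p.1, f p.2)) μ ν := by
  refine le_antisymm (optimalCost_map_le c hf) (le_sInf ?_)
  rintro _ ⟨π, hπ, rfl⟩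
  obtain ⟨π', hπ', rfl⟩ := exists_mem_couplings_map_prodMap_eq hf hπ
  dsimp only
  rw [lintegral_map hc (measurable_id.prodMap hf)]
  exact optimalCost_le_lintegral _ hπ'

end Coupling

/-- For squared Euclidean cost and Gaussian decoder `Y = G(Z) + ε`, `ε ∼ N(0, σ²·I_d)`:
`W_c(P_X, P_G^σ) ≤ d·σ² + inf_{couplings of (P_X,P_Z)} E[‖X − G(Z)‖²]`, and any `G₀`
minimizing the right-hand infimum over `G` also minimizes `W_c(P_X, G_* P_Z)`
(the noiseless case `σ² = 0`). -/
theorem gaussian_decoder_upper_bound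
    {d : ℕ} {𝒵 : Type*} [MeasurableSpace 𝒵]
    (PX : Measure (Fin d → ℝ)) (PZ : Measure 𝒵)
    [IsProbabilityMeasure PX] [IsProbabilityMeasure PZ]
    (v : ℝ≥0)
    (G : 𝒵 → (Fin d → ℝ)) (hG : Measurable G) :
    sInf ((fun γ : Measure ((Fin d → ℝ) × (Fin d → ℝ)) =>
          ∫⁻ p, ENNReal.ofReal (∑ i, (p.1 i - p.2 i) ^ 2) ∂γ) ''
        couplings PX
          ((PZ.prod (Measure.pi fun _ : Fin d => gaussianReal 0 v)).map
            (fun p => G p.1 + p.2)))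
      ≤ (d : ℝ≥0∞) * (v : ℝ≥0∞)
        + sInf ((fun γ : Measure ((Fin d → ℝ) × 𝒵) =>
            ∫⁻ p, ENNReal.ofReal (∑ i, (p.1 i - G p.2 i) ^ 2) ∂γ) '' couplings PX PZ)
    ∧ (∀ G₀ : 𝒵 → (Fin d → ℝ), Measurable G₀ →
        (∀ G' : 𝒵 → (Fin d → ℝ), Measurable G' →
          sInf ((fun γ : Measure ((Fin d → ℝ) × 𝒵) =>
              ∫⁻ p, ENNReal.ofReal (∑ i, (p.1 i - G₀ p.2 i) ^ 2) ∂γ) '' couplings PX PZ)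
            ≤ sInf ((fun γ : Measure ((Fin d → ℝ) × 𝒵) =>
              ∫⁻ p, ENNReal.ofReal (∑ i, (p.1 i - G' p.2 i) ^ 2) ∂γ) '' couplings PX PZ)) →
        ∀ G' : 𝒵 → (Fin d → ℝ), Measurable G' →
          sInf ((fun γ : Measure ((Fin d → ℝ) × (Fin d → ℝ)) =>
              ∫⁻ p, ENNReal.ofReal (∑ i, (p.1 i - p.2 i) ^ 2) ∂γ) ''
            couplings PX (PZ.map G₀))
          ≤ sInf ((fun γ : Measure ((Fin d → ℝ) × (Fin d → ℝ)) =>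
              ∫⁻ p, ENNReal.ofReal (∑ i, (p.1 i - p.2 i) ^ 2) ∂γ) ''
            couplings PX (PZ.map G'))) := by
  have hcost : Measurable fun p : (Fin d → ℝ) × (Fin d → ℝ) =>
      ENNReal.ofReal (∑ i, (p.1 i - p.2 i) ^ 2) := by fun_prop
  set N := Measure.pi fun _ : Fin d => gaussianReal 0 v
  constructor
  · refine le_add_optimalCost fun π hπ => ?_
    have := isProbabilityMeasure_of_mem_couplings hπ
    have hnoise (p : (Fin d → ℝ) × 𝒵) :
        ∫⁻ e, ENNReal.ofReal (∑ i, (p.1 i - (G p.2 + e) i) ^ 2) ∂N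
          = ENNReal.ofReal (∑ i, (p.1 i - G p.2 i) ^ 2) + d * v := by
      simpa [sub_add_eq_sub_sub] using
        lintegral_sum_sq_sub_pi_gaussianReal v (fun i => p.1 i - G p.2 i)
    calc _ ≤ optimalCost (fun p : (Fin d → ℝ) × 𝒵 × (Fin d → ℝ) =>
            ENNReal.ofReal (∑ i, (p.1 i - (G p.2.1 + p.2.2) i) ^ 2)) PX (PZ.prod N) :=
          optimalCost_map_le _ (by fun_prop)
      _ ≤ ∫⁻ p, ∫⁻ e, ENNReal.ofReal (∑ i, (p.1 i - (G p.2 + e) i) ^ 2) ∂N ∂π :=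
        optimalCost_prod_le _ N hπ
      _ = d * v + ∫⁻ p, ENNReal.ofReal (∑ i, (p.1 i - G p.2 i) ^ 2) ∂π := by
        simp_rw [hnoise]
        rw [lintegral_add_right _ measurable_const, lintegral_const, measure_univ, mul_one,
          add_comm]
  · intro G₀ hG₀ hmin G' hG'
    exact (optimalCost_map hcost hG₀).trans_le ((hmin G' hG').trans_eq
      (optimalCost_map hcost hG').symm)
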